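/- arXiv:1803.07069 — 7 statements merged into one kernel-verified Lean document; each statement's English description precedes it below -/
import Mathlib

section
/- If X is a real-valued random variable with E[X] = 0 and E[X^2] = 1, then the function d(t) = E[X · 1{X > t}] satisfies ∫_ℝ d(t) dt = 1. -/
open MeasureTheory Set

lemma aux_pos_side (c : ℝ) :
    ∫⁻ t in Ici (0:ℝ), ENNReal.ofReal (if t < c then c else 0) =
      ENNReal.ofReal ((max c 0) ^ 2) := by
  have h1 : ∀ t : ℝ, ENNReal.ofReal (if t < c then c else 0) =
      (Iio c).indicator (fun _ => ENNReal.ofReal c) t := by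
    intro t; by_cases h : t < c <;> simp [Set.indicator, h]
  rw [lintegral_congr h1, lintegral_indicator measurableSet_Iio,
    Measure.restrict_restrict measurableSet_Iio,
    lintegral_const, Measure.restrict_apply MeasurableSet.univ, Set.univ_inter, Set.Iio_inter_Ici]
  rw [Real.volume_Ico]
  rcases le_or_gt c 0 with h | h
  · simp [ENNReal.ofReal_eq_zero.2 h, max_eq_right h, sub_nonpos.2 h]
  · rw [sub_zero, ← ENNReal.ofReal_mul h.le, max_eq_left h.le, sq]

lemma aux_neg_side (c : ℝ) :
    ∫⁻ t in Iio (0:ℝ), ENNReal.ofReal (if c ≤ t then -c else 0) =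
      ENNReal.ofReal ((min c 0) ^ 2) := by
  have h1 : ∀ t : ℝ, ENNReal.ofReal (if c ≤ t then -c else 0) =
      (Ici c).indicator (fun _ => ENNReal.ofReal (-c)) t := by
    intro t; by_cases h : c ≤ t <;> simp [Set.indicator, h]
  rw [lintegral_congr h1, lintegral_indicator measurableSet_Ici,
    Measure.restrict_restrict measurableSet_Ici,
    lintegral_const, Measure.restrict_apply MeasurableSet.univ, Set.univ_inter, Set.Ici_inter_Iio]
  rw [Real.volume_Ico, zero_sub]
  rcases le_or_gt c 0 with h | h
  · rw [← ENNReal.ofReal_mul (by linarith), min_eq_left h]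
    ring_nf
  · simp [min_eq_right h.le, ENNReal.ofReal_eq_zero.2 (by linarith : -c ≤ 0)]

theorem stmt_1 {Ω : Type*} [MeasurableSpace Ω] (μ : Measure Ω) [IsProbabilityMeasure μ]
    (X : Ω → ℝ) (hXmeas : Measurable X)
    (hX1 : Integrable X μ) (hX2 : Integrable (fun ω => (X ω) ^ 2) μ)
    (hmean : ∫ ω, X ω ∂μ = 0) (hvar : ∫ ω, (X ω) ^ 2 ∂μ = 1) :
    ∫ t : ℝ, (∫ ω, (if t < X ω then X ω else 0) ∂μ) = 1 := by
  classical
  -- basic measurability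
  have hXsnd : Measurable fun p : ℝ × Ω => X p.2 := hXmeas.comp measurable_snd
  have hFmeas : Measurable (Function.uncurry fun (t : ℝ) (ω : Ω) =>
      ENNReal.ofReal (if t < X ω then X ω else 0)) := by
    apply ENNReal.measurable_ofReal.comp
    exact Measurable.ite (measurableSet_lt measurable_fst hXsnd) hXsnd measurable_const
  have hF'meas : Measurable (Function.uncurry fun (t : ℝ) (ω : Ω) =>
      ENNReal.ofReal (if X ω ≤ t then -(X ω) else 0)) := by
    apply ENNReal.measurable_ofReal.comp
    exact Measurable.ite (measurableSet_le hXsnd measurable_fst) hXsnd.neg measurable_const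
  set G : ℝ → ENNReal := fun t => ∫⁻ ω, ENNReal.ofReal (if t < X ω then X ω else 0) ∂μ with hGdef
  set H : ℝ → ENNReal := fun t => ∫⁻ ω, ENNReal.ofReal (if X ω ≤ t then -(X ω) else 0) ∂μ
    with hHdef
  have hGmeas : Measurable G := hFmeas.lintegral_prod_right
  have hHmeas : Measurable H := hF'meas.lintegral_prod_right
  -- finiteness of norm lintegral
  have hfin : ∫⁻ ω, ENNReal.ofReal |X ω| ∂μ < ⊤ := by
    have := hX1.hasFiniteIntegral
    simpa [HasFiniteIntegral, Real.enorm_eq_ofReal_abs] using this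
  have hGfin : ∀ t, G t < ⊤ := by
    intro t
    refine lt_of_le_of_lt (lintegral_mono fun ω => ?_) hfin
    by_cases h : t < X ω <;> simp [h, ENNReal.ofReal_le_ofReal, le_abs_self, abs_nonneg]
  have hHfin : ∀ t, H t < ⊤ := by
    intro t
    refine lt_of_le_of_lt (lintegral_mono fun ω => ?_) hfin
    by_cases h : X ω ≤ t <;> simp [h, ENNReal.ofReal_le_ofReal, neg_le_abs, abs_nonneg]
  -- integrability of max/min squares
  have hmax_int : Integrable (fun ω => (max (X ω) 0) ^ 2) μ := by
    refine hX2.mono' (((hXmeas.max measurable_const).pow_const 2).aestronglyMeasurable)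
      (Filter.Eventually.of_forall fun ω => ?_)
    rw [Real.norm_eq_abs, abs_of_nonneg (sq_nonneg _)]
    rcases le_total (X ω) 0 with h | h
    · simp [max_eq_right h, sq_nonneg]
    · simp [max_eq_left h]
  have hmin_int : Integrable (fun ω => (min (X ω) 0) ^ 2) μ := by
    refine hX2.mono' (((hXmeas.min measurable_const).pow_const 2).aestronglyMeasurable)
      (Filter.Eventually.of_forall fun ω => ?_)
    rw [Real.norm_eq_abs, abs_of_nonneg (sq_nonneg _)]
    rcases le_total (X ω) 0 with h | h
    · simp [min_eq_left h]
    · simp [min_eq_right h, sq_nonneg]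
  -- Tonelli computations
  have swap_pos : ∫⁻ t in Ici (0:ℝ), G t = ENNReal.ofReal (∫ ω, (max (X ω) 0) ^ 2 ∂μ) := by
    rw [hGdef]
    rw [lintegral_lintegral_swap hFmeas.aemeasurable]
    rw [lintegral_congr fun ω => aux_pos_side (X ω)]
    rw [← ofReal_integral_eq_lintegral_ofReal hmax_int
      (Filter.Eventually.of_forall fun ω => sq_nonneg _)]
  have swap_neg : ∫⁻ t in Iio (0:ℝ), H t = ENNReal.ofReal (∫ ω, (min (X ω) 0) ^ 2 ∂μ) := by
    rw [hHdef]
    rw [lintegral_lintegral_swap hF'meas.aemeasurable]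
    rw [lintegral_congr fun ω => aux_neg_side (X ω)]
    rw [← ofReal_integral_eq_lintegral_ofReal hmin_int
      (Filter.Eventually.of_forall fun ω => sq_nonneg _)]
  -- pointwise identification of the inner Bochner integral
  have step_pos : ∀ t ∈ Ici (0:ℝ), (∫ ω, (if t < X ω then X ω else 0) ∂μ) = (G t).toReal := by
    intro t ht
    apply integral_eq_lintegral_of_nonneg_ae
    · refine Filter.Eventually.of_forall fun ω => ?_
      dsimp only
      split_ifs with h
      · exact le_of_lt (lt_of_le_of_lt ht h)
      · exact le_refl 0
    · exact (Measurable.ite (measurableSet_lt measurable_const hXmeas) hXmeas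
        measurable_const).aestronglyMeasurable
  have step_neg : ∀ t ∈ Iio (0:ℝ), (∫ ω, (if t < X ω then X ω else 0) ∂μ) = (H t).toReal := by
    intro t ht
    have hs : MeasurableSet {ω | X ω ≤ t} := measurableSet_le hXmeas measurable_const
    have h2 : Integrable (fun ω => if X ω ≤ t then X ω else 0) μ := by
      refine (hX1.indicator hs).congr (Filter.Eventually.of_forall fun ω => ?_)
      simp [Set.indicator_apply]
    have hdecomp : (fun ω => if t < X ω then X ω else 0)
        = fun ω => X ω - (if X ω ≤ t then X ω else 0) := by
      funext ω; by_cases h : t < X ω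
      · simp [h, not_le.2 h]
      · simp [h, not_lt.1 h]
    have hval : (∫ ω, (if t < X ω then X ω else 0) ∂μ)
        = ∫ ω, (if X ω ≤ t then -(X ω) else 0) ∂μ := by
      rw [hdecomp, integral_sub hX1 h2, hmean, zero_sub, ← integral_neg]
      congr 1; funext ω; by_cases h : X ω ≤ t <;> simp [h]
    rw [hval]
    apply integral_eq_lintegral_of_nonneg_ae
    · refine Filter.Eventually.of_forall fun ω => ?_
      simp only [Pi.zero_apply]
      split_ifs with h
      · have : X ω < 0 := lt_of_le_of_lt h ht
        linarith
      · exact le_refl 0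
    · exact (Measurable.ite (measurableSet_le hXmeas measurable_const) hXmeas.neg
        measurable_const).aestronglyMeasurable
  -- integrability on the two half-lines
  have int_pos : IntegrableOn (fun t => ∫ ω, (if t < X ω then X ω else 0) ∂μ) (Ici 0) := by
    refine (integrable_toReal_of_lintegral_ne_top (hGmeas.aemeasurable.restrict)
      (by rw [swap_pos]; exact ENNReal.ofReal_ne_top)).congr ?_
    exact (ae_restrict_iff' measurableSet_Ici).2
      (Filter.Eventually.of_forall fun t ht => (step_pos t ht).symm)
  have int_neg : IntegrableOn (fun t => ∫ ω, (if t < X ω then X ω else 0) ∂μ) (Iio 0) := by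
    refine (integrable_toReal_of_lintegral_ne_top (hHmeas.aemeasurable.restrict)
      (by rw [swap_neg]; exact ENNReal.ofReal_ne_top)).congr ?_
    exact (ae_restrict_iff' measurableSet_Iio).2
      (Filter.Eventually.of_forall fun t ht => (step_neg t ht).symm)
  -- values on the two half-lines
  have val_pos : ∫ t in Ici (0:ℝ), (∫ ω, (if t < X ω then X ω else 0) ∂μ)
      = ∫ ω, (max (X ω) 0) ^ 2 ∂μ := by
    rw [setIntegral_congr_fun measurableSet_Ici step_pos,
      integral_toReal hGmeas.aemeasurable.restrict
        (Filter.Eventually.of_forall fun t => hGfin t),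
      swap_pos, ENNReal.toReal_ofReal (integral_nonneg fun ω => sq_nonneg _)]
  have val_neg : ∫ t in Iio (0:ℝ), (∫ ω, (if t < X ω then X ω else 0) ∂μ)
      = ∫ ω, (min (X ω) 0) ^ 2 ∂μ := by
    rw [setIntegral_congr_fun measurableSet_Iio step_neg,
      integral_toReal hHmeas.aemeasurable.restrict
        (Filter.Eventually.of_forall fun t => hHfin t),
      swap_neg, ENNReal.toReal_ofReal (integral_nonneg fun ω => sq_nonneg _)]
  -- assemble
  rw [← intervalIntegral.integral_Iio_add_Ici int_neg int_pos, val_pos, val_neg, ← integral_add hmin_int hmax_int]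
  rw [show (fun ω => (min (X ω) 0) ^ 2 + (max (X ω) 0) ^ 2) = fun ω => (X ω) ^ 2 by
    funext ω
    rcases le_total (X ω) 0 with h | h
    · simp [min_eq_left h, max_eq_right h]
    · simp [min_eq_right h, max_eq_left h]]
  exact hvar
end

section
/- If X is a real-valued random variable with E[X] = 0 and E[X^2] = 1, then for every s ∈ ℝ, ∫_{-∞}^{s} E[X · 1{X > t}] dt = E[X(X - s) · 1{X ≤ s}]. -/
open MeasureTheory Set

/-! Writing `X·1{X > t} = X - X·1{X ≤ t}` and using `E[X] = 0`, the integrand is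
`-E[X·1{X ≤ t}]`. The function `(t, ω) ↦ X ω·1{X ω ≤ t}` on `Iic s × Ω` is integrable because
its inner `t`-integral of the absolute value is `|X|·(s - X)⁺ ≤ |s||X| + X²`, so Fubini lets us
integrate in `t` first, which gives `X·(s - X)⁺ = -X(X - s)·1{X ≤ s}`. -/

lemma setIntegral_Iic_ite_le (s c v : ℝ) :
    ∫ t in Iic s, (if c ≤ t then v else 0) = v * max (s - c) 0 := by
  have hind : (fun t : ℝ => if c ≤ t then v else 0) = (Ici c).indicator fun _ => v := by
    ext t; simp [indicator]
  rw [hind, setIntegral_indicator measurableSet_Ici, setIntegral_const, inter_comm,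
    Ici_inter_Iic, Measure.real, Real.volume_Icc, smul_eq_mul]
  rcases le_total c s with h | h
  · rw [ENNReal.toReal_ofReal (by linarith), max_eq_left (by linarith), mul_comm]
  · rw [ENNReal.ofReal_eq_zero.2 (by linarith), max_eq_right (by linarith)]; simp

lemma abs_mul_max_sub_le (x s : ℝ) : |x| * max (s - x) 0 ≤ |s| * |x| + x ^ 2 := by
  have hmax : max (s - x) 0 ≤ |s| + |x| :=
    max_le (by linarith [le_abs_self s, neg_abs_le x]) (by positivity)
  nlinarith [abs_nonneg x, sq_abs x]

section

variable {Ω : Type*} [MeasurableSpace Ω] {μ : Measure Ω} {X : Ω → ℝ}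

lemma integral_ite_lt_add_integral_ite_le (hXmeas : Measurable X) (hX : Integrable X μ) (t : ℝ) :
    ∫ ω, (if t < X ω then X ω else 0) ∂μ + ∫ ω, (if X ω ≤ t then X ω else 0) ∂μ
      = ∫ ω, X ω ∂μ := by
  have hgt : Integrable (fun ω => if t < X ω then X ω else 0) μ :=
    (hX.indicator (hXmeas (measurableSet_Ioi (a := t)))).congr
      (ae_of_all _ fun ω => by simp [indicator])
  have hle : Integrable (fun ω => if X ω ≤ t then X ω else 0) μ :=
    (hX.indicator (hXmeas (measurableSet_Iic (a := t)))).congr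
      (ae_of_all _ fun ω => by simp [indicator])
  rw [← integral_add hgt hle]
  refine integral_congr_ae (ae_of_all _ fun ω => ?_)
  by_cases h : t < X ω
  · simp [h, not_le.2 h]
  · simp [h, not_lt.1 h]

lemma integrable_prod_ite_le [SFinite μ] (hXmeas : Measurable X) (hX1 : Integrable X μ)
    (hX2 : Integrable (fun ω => X ω ^ 2) μ) (s : ℝ) :
    Integrable (fun p : ℝ × Ω => if X p.2 ≤ p.1 then X p.2 else 0)
      ((volume.restrict (Iic s)).prod μ) := by
  have hmeas : Measurable (fun p : ℝ × Ω => if X p.2 ≤ p.1 then X p.2 else 0) :=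
    Measurable.ite (measurableSet_le (hXmeas.comp measurable_snd) measurable_fst)
      (hXmeas.comp measurable_snd) measurable_const
  rw [integrable_prod_iff' hmeas.aestronglyMeasurable]
  constructor
  · refine ae_of_all _ fun ω => ?_
    have hind : (fun t : ℝ => if X ω ≤ t then X ω else 0) = (Ici (X ω)).indicator fun _ => X ω := by
      ext t; simp [indicator]
    rw [hind, integrable_indicator_iff measurableSet_Ici, IntegrableOn,
      Measure.restrict_restrict measurableSet_Ici, Ici_inter_Iic]
    exact integrableOn_const (by simp) enorm_ne_top
  · have hnorm : (fun ω => ∫ t in Iic s, ‖if X ω ≤ t then X ω else 0‖)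
        = fun ω => |X ω| * max (s - X ω) 0 := by
      funext ω
      simp only [apply_ite norm, norm_zero, Real.norm_eq_abs]
      exact setIntegral_Iic_ite_le s (X ω) |X ω|
    rw [hnorm]
    refine ((hX1.abs.const_mul |s|).add hX2).mono
      (hXmeas.abs.mul ((measurable_const.sub hXmeas).max measurable_const)).aestronglyMeasurable
      (ae_of_all _ fun ω => ?_)
    simp only [Real.norm_eq_abs, Pi.add_apply]
    rw [abs_of_nonneg (by positivity)]
    exact (abs_mul_max_sub_le (X ω) s).trans (le_abs_self _)

end

theorem stmt_2_general {Ω : Type*} [MeasurableSpace Ω] (μ : Measure Ω) [IsProbabilityMeasure μ]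
    (X : Ω → ℝ) (hXmeas : Measurable X)
    (hX1 : Integrable X μ) (hX2 : Integrable (fun ω => (X ω) ^ 2) μ)
    (hmean : ∫ ω, X ω ∂μ = 0) (s : ℝ) :
    ∫ t in Set.Iic s, (∫ ω, (if t < X ω then X ω else 0) ∂μ)
      = ∫ ω, (if X ω ≤ s then X ω * (X ω - s) else 0) ∂μ := by
  have hsplit (t : ℝ) : ∫ ω, (if t < X ω then X ω else 0) ∂μ
      = -∫ ω, (if X ω ≤ t then X ω else 0) ∂μ := by
    linarith [integral_ite_lt_add_integral_ite_le hXmeas hX1 t]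
  simp_rw [hsplit]
  rw [integral_neg, integral_integral_swap (integrable_prod_ite_le hXmeas hX1 hX2 s),
    ← integral_neg]
  refine integral_congr_ae (ae_of_all _ fun ω => ?_)
  dsimp only
  rw [setIntegral_Iic_ite_le]
  by_cases h : X ω ≤ s
  · rw [if_pos h, max_eq_left (by linarith)]; ring
  · rw [if_neg h, max_eq_right (by linarith)]; ring

theorem stmt_2 {Ω : Type*} [MeasurableSpace Ω] (μ : Measure Ω) [IsProbabilityMeasure μ]
    (X : Ω → ℝ) (hXmeas : Measurable X)
    (hX1 : Integrable X μ) (hX2 : Integrable (fun ω => (X ω) ^ 2) μ)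
    (hmean : ∫ ω, X ω ∂μ = 0) (hvar : ∫ ω, (X ω) ^ 2 ∂μ = 1) (s : ℝ) :
    ∫ t in Set.Iic s, (∫ ω, (if t < X ω then X ω else 0) ∂μ)
      = ∫ ω, (if X ω ≤ s then X ω * (X ω - s) else 0) ∂μ :=
  stmt_2_general μ X hXmeas hX1 hX2 hmean s
end

section
/- If X is a real-valued random variable with E[X] = 0 and E[X^2] = 1, then the function F^X(s) = E[X(X - s) · 1{X ≤ s}] is nondecreasing, tends to 0 as s → -∞ and to 1 as s → +∞, i.e., F^X is a distribution function. -/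
/-!
Since `x (x - s) 1{x ≤ s} = x (min x s - s)` and `E X = 0`, we have `F s = E[X min(X, s)]`.
For `s ≤ t` the increment `F t - F s` is `E[X ψ(X)]` with `ψ = min (·) t - min (·) s`
nondecreasing, and `E[X ψ(X)] = E[X (ψ(X) - ψ(0))] ≥ 0` because `x (ψ x - ψ 0) ≥ 0` pointwise.
Both limits follow by dominated convergence with dominating function `X²`.
-/

open MeasureTheory Filter Topology

theorem ite_le_mul_sub_eq_mul_min_sub (x s : ℝ) :
    (if x ≤ s then x * (x - s) else 0) = x * (min x s - s) := by
  split_ifs with h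
  · rw [min_eq_left h]
  · rw [min_eq_right (not_le.mp h).le, sub_self, mul_zero]

theorem monotone_min_sub_min {s t : ℝ} (hst : s ≤ t) : Monotone fun x : ℝ => min x t - min x s := by
  intro x y hxy
  simp only [min_def]
  split_ifs <;> linarith

section

variable {Ω : Type*} [MeasurableSpace Ω] {μ : Measure Ω} {X : Ω → ℝ}

theorem integral_mul_comp_nonneg_of_monotone (hX : Integrable X μ) (hmean : ∫ ω, X ω ∂μ = 0)
    {φ : ℝ → ℝ} (hφ : Monotone φ) (hint : Integrable (fun ω => X ω * φ (X ω)) μ) :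
    0 ≤ ∫ ω, X ω * φ (X ω) ∂μ := by
  have hcentre : ∫ ω, X ω * φ (X ω) ∂μ = ∫ ω, X ω * (φ (X ω) - φ 0) ∂μ := by
    simp only [mul_sub]
    rw [integral_sub hint (hX.mul_const _), integral_mul_const, hmean, zero_mul, sub_zero]
  rw [hcentre]
  refine integral_nonneg fun ω => ?_
  rcases le_total 0 (X ω) with h | h
  · exact mul_nonneg h (sub_nonneg.mpr (hφ h))
  · exact mul_nonneg_of_nonpos_of_nonpos h (sub_nonpos.mpr (hφ h))

theorem integrable_mul_min (hX1 : Integrable X μ) (hX2 : Integrable (fun ω => X ω ^ 2) μ)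
    (s : ℝ) : Integrable (fun ω => X ω * min (X ω) s) μ := by
  refine (hX2.add (hX1.abs.const_mul |s|)).mono'
    (hX1.aestronglyMeasurable.mul (hX1.aestronglyMeasurable.inf aestronglyMeasurable_const))
    (ae_of_all _ fun ω => ?_)
  have hmin : |min (X ω) s| ≤ |X ω| + |s| :=
    abs_min_le_max_abs_abs.trans (max_le_add_of_nonneg (abs_nonneg _) (abs_nonneg _))
  calc ‖X ω * min (X ω) s‖ = |X ω| * |min (X ω) s| := by rw [Real.norm_eq_abs, abs_mul]
    _ ≤ |X ω| * (|X ω| + |s|) := mul_le_mul_of_nonneg_left hmin (abs_nonneg _)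
    _ = X ω ^ 2 + |s| * |X ω| := by rw [mul_add, ← sq, sq_abs, mul_comm]

theorem integral_mul_min_sub (hX1 : Integrable X μ) (hX2 : Integrable (fun ω => X ω ^ 2) μ)
    (hmean : ∫ ω, X ω ∂μ = 0) (s : ℝ) :
    ∫ ω, X ω * (min (X ω) s - s) ∂μ = ∫ ω, X ω * min (X ω) s ∂μ := by
  simp only [mul_sub]
  rw [integral_sub (integrable_mul_min hX1 hX2 s) (hX1.mul_const _), integral_mul_const, hmean,
    zero_mul, sub_zero]

theorem monotone_integral_mul_min (hX1 : Integrable X μ) (hX2 : Integrable (fun ω => X ω ^ 2) μ)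
    (hmean : ∫ ω, X ω ∂μ = 0) : Monotone fun s => ∫ ω, X ω * min (X ω) s ∂μ := by
  intro s t hst
  have hint := fun s => integrable_mul_min hX1 hX2 s
  have hincr := integral_mul_comp_nonneg_of_monotone hX1 hmean (monotone_min_sub_min hst)
    (by simp only [mul_sub]; exact (hint t).sub (hint s))
  simp only [mul_sub] at hincr
  rw [integral_sub (hint t) (hint s)] at hincr
  exact sub_nonneg.mp hincr

theorem tendsto_integral_mul_comp {ι : Type*} {l : Filter ι} [l.IsCountablyGenerated]
    {g : ι → ℝ → ℝ} {g₀ : ℝ → ℝ} (hX : AEStronglyMeasurable X μ)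
    (hX2 : Integrable (fun ω => X ω ^ 2) μ) (hg : ∀ i, Continuous (g i))
    (hbound : ∀ᶠ i in l, ∀ x, |g i x| ≤ |x|) (hlim : ∀ x, Tendsto (fun i => g i x) l (𝓝 (g₀ x))) :
    Tendsto (fun i => ∫ ω, X ω * g i (X ω) ∂μ) l (𝓝 (∫ ω, X ω * g₀ (X ω) ∂μ)) := by
  refine tendsto_integral_filter_of_dominated_convergence (fun ω => X ω ^ 2)
    (Eventually.of_forall fun i => hX.mul ((hg i).comp_aestronglyMeasurable hX)) ?_ hX2
    (ae_of_all _ fun ω => (hlim (X ω)).const_mul (X ω))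
  filter_upwards [hbound] with i hi
  refine ae_of_all _ fun ω => ?_
  calc ‖X ω * g i (X ω)‖ = |X ω| * |g i (X ω)| := by rw [Real.norm_eq_abs, abs_mul]
    _ ≤ |X ω| * |X ω| := mul_le_mul_of_nonneg_left (hi _) (abs_nonneg _)
    _ = X ω ^ 2 := by rw [← sq, sq_abs]

theorem tendsto_integral_mul_min_atTop (hX : AEStronglyMeasurable X μ)
    (hX2 : Integrable (fun ω => X ω ^ 2) μ) :
    Tendsto (fun s => ∫ ω, X ω * min (X ω) s ∂μ) atTop (𝓝 (∫ ω, X ω ^ 2 ∂μ)) := by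
  have hlim := tendsto_integral_mul_comp (μ := μ) (l := atTop) (g := fun s x => min x s)
    (g₀ := fun x => x) hX hX2 (fun s => continuous_id.min continuous_const) ?_
    fun x => tendsto_const_nhds.congr' ?_
  · simpa only [sq] using hlim
  · filter_upwards [eventually_ge_atTop 0] with s hs x
    rcases le_total x s with h | h
    · rw [min_eq_left h]
    · rw [min_eq_right h, abs_of_nonneg hs, abs_of_nonneg (hs.trans h)]
      exact h
  · filter_upwards [eventually_ge_atTop x] with s hs
    rw [min_eq_left hs]

theorem tendsto_integral_mul_min_sub_atBot (hX : AEStronglyMeasurable X μ)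
    (hX2 : Integrable (fun ω => X ω ^ 2) μ) :
    Tendsto (fun s => ∫ ω, X ω * (min (X ω) s - s) ∂μ) atBot (𝓝 0) := by
  have hlim := tendsto_integral_mul_comp (μ := μ) (l := atBot) (g := fun s x => min x s - s) (g₀ := 0) hX hX2
    (fun s => (continuous_id.min continuous_const).sub continuous_const) ?_
    fun x => tendsto_const_nhds.congr' ?_
  · simpa using hlim
  · filter_upwards [eventually_le_atBot 0] with s hs x
    rcases le_total x s with h | h
    · rw [min_eq_left h, abs_of_nonpos (sub_nonpos.mpr h), abs_of_nonpos (h.trans hs)]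
      linarith
    · rw [min_eq_right h, sub_self, abs_zero]
      exact abs_nonneg x
  · filter_upwards [eventually_le_atBot x] with s hs
    rw [min_eq_right hs, sub_self, Pi.zero_apply]

end

theorem stmt_3_general {Ω : Type*} [MeasurableSpace Ω] (μ : Measure Ω)
    (X : Ω → ℝ)
    (hX1 : Integrable X μ) (hX2 : Integrable (fun ω => (X ω) ^ 2) μ)
    (hmean : ∫ ω, X ω ∂μ = 0) (hvar : ∫ ω, (X ω) ^ 2 ∂μ = 1)
    (F : ℝ → ℝ) (hF : ∀ s, F s = ∫ ω, (if X ω ≤ s then X ω * (X ω - s) else 0) ∂μ) :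
    Monotone F ∧ Tendsto F atBot (nhds 0) ∧ Tendsto F atTop (nhds 1) := by
  have hF_sub : F = fun s => ∫ ω, X ω * (min (X ω) s - s) ∂μ :=
    funext fun s => by simp only [hF, ite_le_mul_sub_eq_mul_min_sub]
  have hF_min : F = fun s => ∫ ω, X ω * min (X ω) s ∂μ :=
    hF_sub.trans (funext (integral_mul_min_sub hX1 hX2 hmean))
  refine ⟨?_, ?_, ?_⟩
  · rw [hF_min]
    exact monotone_integral_mul_min hX1 hX2 hmean
  · rw [hF_sub]
    exact tendsto_integral_mul_min_sub_atBot hX1.aestronglyMeasurable hX2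
  · rw [hF_min, ← hvar]
    exact tendsto_integral_mul_min_atTop hX1.aestronglyMeasurable hX2

theorem stmt_3 {Ω : Type*} [MeasurableSpace Ω] (μ : Measure Ω) [IsProbabilityMeasure μ]
    (X : Ω → ℝ) (hXmeas : Measurable X)
    (hX1 : Integrable X μ) (hX2 : Integrable (fun ω => (X ω) ^ 2) μ)
    (hmean : ∫ ω, X ω ∂μ = 0) (hvar : ∫ ω, (X ω) ^ 2 ∂μ = 1)
    (F : ℝ → ℝ) (hF : ∀ s, F s = ∫ ω, (if X ω ≤ s then X ω * (X ω - s) else 0) ∂μ) :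
    Monotone F ∧ Tendsto F atBot (nhds 0) ∧ Tendsto F atTop (nhds 1) :=
  stmt_3_general μ X hX1 hX2 hmean hvar F hF
end

section
/- If X is a real-valued random variable with E[X] = 0 and E[X^2] = 1, then the function F^X(s) = E[X(X - s) · 1{X ≤ s}] is continuous on ℝ. -/
open MeasureTheory

theorem stmt_4 {Ω : Type*} [MeasurableSpace Ω] (μ : Measure Ω) [IsProbabilityMeasure μ]
    (X : Ω → ℝ) (hXmeas : Measurable X)
    (hX1 : Integrable X μ) (hX2 : Integrable (fun ω => (X ω) ^ 2) μ)
    (hmean : ∫ ω, X ω ∂μ = 0) (hvar : ∫ ω, (X ω) ^ 2 ∂μ = 1) :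
    Continuous (fun s : ℝ => ∫ ω, (if X ω ≤ s then X ω * (X ω - s) else 0) ∂μ) := by
  have heq : ∀ (s : ℝ) (ω : Ω),
      (if X ω ≤ s then X ω * (X ω - s) else 0) = X ω * min (X ω - s) 0 := by
    intro s ω
    split_ifs with h
    · rw [min_eq_left (by linarith)]
    · rw [min_eq_right (by linarith), mul_zero]
  simp_rw [heq]
  rw [continuous_iff_continuousAt]
  intro s₀
  apply continuousAt_of_dominated (bound := fun ω => X ω ^ 2 + (|s₀| + 1) * |X ω|)
  · filter_upwards with s
    exact ((hXmeas.mul ((hXmeas.sub measurable_const).min measurable_const)).aestronglyMeasurable)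
  · filter_upwards [Metric.ball_mem_nhds s₀ one_pos] with s hs
    filter_upwards with ω
    have hs' : |s| ≤ |s₀| + 1 := by
      have h := mem_ball_iff_norm.mp hs
      have h2 : |s - s₀| < 1 := h
      calc |s| = |s - s₀ + s₀| := by ring_nf
        _ ≤ |s - s₀| + |s₀| := abs_add_le _ _
        _ ≤ |s₀| + 1 := by linarith
    have hmin : |min (X ω - s) 0| ≤ |X ω| + |s| := by
      rcases le_total (X ω - s) 0 with h | h
      · rw [min_eq_left h]
        have := abs_sub (X ω) s
        linarith
      · rw [min_eq_right h]
        have := abs_nonneg (X ω)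
        have := abs_nonneg s
        simp only [abs_zero]
        linarith
    have hX2' : |X ω| * |X ω| = X ω ^ 2 := by rw [abs_mul_abs_self, sq]
    rw [Real.norm_eq_abs, abs_mul]
    nlinarith [mul_le_mul_of_nonneg_left hmin (abs_nonneg (X ω)), abs_nonneg (X ω),
      mul_le_mul_of_nonneg_left hs' (abs_nonneg (X ω))]
  · exact hX2.add (hX1.abs.const_mul _)
  · filter_upwards with ω
    exact (continuous_const.mul
      ((continuous_const.sub continuous_id).min continuous_const)).continuousAt
end

section
/- Let X be a real-valued random variable with E[X] = 0, E[X^2] = 1, and let f : ℝ → ℝ be continuously differentiable with bounded derivative. Then E[X f(X)] = ∫_ℝ f'(t) · E[X · 1{X > t}] dt. -/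
/-! With `k(x, t) = x · (1{t < x} - 1{t < 0})`, which is nonnegative with `∫ k(x, t) dt = x²`,
the fundamental theorem of calculus gives `x (f x - f 0) = ∫ f'(t) k(x, t) dt`. Since `f'` is
bounded and `E[X²] < ∞`, Fubini applies, and `E[k(X, t)] = E[X 1{X > t}] - 1{t < 0} E[X]`;
both terms involving `E[X] = 0` drop out. -/

open MeasureTheory Set

noncomputable def zeroBiasKernel (x t : ℝ) : ℝ :=
  (if t < x then x else 0) - if t < 0 then x else 0

lemma zeroBiasKernel_eq_indicator (x t : ℝ) :
    zeroBiasKernel x t = (Ico (min 0 x) (max 0 x)).indicator (fun _ => |x|) t := by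
  rcases le_or_gt 0 x with hx | hx
  · rw [min_eq_left hx, max_eq_right hx, abs_of_nonneg hx]
    by_cases h0 : t < 0
    · simp [zeroBiasKernel, h0, h0.trans_le hx, not_le.mpr h0]
    · by_cases h1 : t < x <;> simp [zeroBiasKernel, h0, h1, not_lt.mp h0]
  · rw [min_eq_right hx.le, max_eq_left hx.le, abs_of_neg hx]
    by_cases h1 : t < x
    · simp [zeroBiasKernel, h1, h1.trans hx, not_le.mpr h1]
    · by_cases h0 : t < 0 <;> simp [zeroBiasKernel, h0, h1, not_lt.mp h1]

lemma zeroBiasKernel_nonneg (x t : ℝ) : 0 ≤ zeroBiasKernel x t := by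
  rw [zeroBiasKernel_eq_indicator]
  exact indicator_nonneg (fun _ _ => abs_nonneg x) t

lemma measurable_zeroBiasKernel : Measurable (Function.uncurry zeroBiasKernel) := by
  unfold Function.uncurry zeroBiasKernel
  exact (Measurable.ite (measurableSet_lt measurable_snd measurable_fst) measurable_fst
    measurable_const).sub
    (Measurable.ite (measurableSet_lt measurable_snd measurable_const) measurable_fst
      measurable_const)

lemma integrable_zeroBiasKernel (x : ℝ) : Integrable (zeroBiasKernel x) := by
  simp_rw [funext (zeroBiasKernel_eq_indicator x)]
  exact (integrableOn_const (by simp)).integrable_indicator measurableSet_Ico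

lemma integral_mul_zeroBiasKernel (g : ℝ → ℝ) (x : ℝ) :
    ∫ t, g t * zeroBiasKernel x t = x * ∫ t in (0 : ℝ)..x, g t := by
  have hind : (fun t => g t * zeroBiasKernel x t)
      = (Ico (min 0 x) (max 0 x)).indicator (fun t => |x| * g t) := by
    ext t
    rw [zeroBiasKernel_eq_indicator, indicator_apply, indicator_apply]
    split_ifs <;> ring
  rw [hind, integral_indicator measurableSet_Ico, integral_Ico_eq_integral_Ioc, integral_const_mul,
    intervalIntegral.intervalIntegral_eq_integral_uIoc, uIoc]
  rcases le_or_gt 0 x with hx | hx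
  · simp [hx, abs_of_nonneg hx]
  · simp [hx.not_ge, abs_of_neg hx]

lemma integral_zeroBiasKernel (x : ℝ) : ∫ t, zeroBiasKernel x t = x ^ 2 := by
  simpa [sq] using integral_mul_zeroBiasKernel (fun _ => 1) x

lemma integral_deriv_mul_zeroBiasKernel {f : ℝ → ℝ} (hf : ContDiff ℝ 1 f) (x : ℝ) :
    ∫ t, deriv f t * zeroBiasKernel x t = x * (f x - f 0) := by
  rw [integral_mul_zeroBiasKernel, intervalIntegral.integral_deriv_eq_sub
    (fun t _ => (hf.differentiable one_ne_zero).differentiableAt)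
    ((hf.continuous_deriv le_rfl).intervalIntegrable _ _)]

lemma integrable_mul_zeroBiasKernel_comp {Ω : Type*} [MeasurableSpace Ω] {μ : Measure Ω}
    [SFinite μ] {X : Ω → ℝ} (hX : Measurable X) (hX2 : Integrable (fun ω => X ω ^ 2) μ)
    {g : ℝ → ℝ} (hg : Measurable g) {C : ℝ} (hC : ∀ t, |g t| ≤ C) :
    Integrable (fun p : Ω × ℝ => g p.2 * zeroBiasKernel (X p.1) p.2) (μ.prod volume) := by
  have hmeas : Measurable (fun p : Ω × ℝ => g p.2 * zeroBiasKernel (X p.1) p.2) :=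
    (hg.comp measurable_snd).mul
      (measurable_zeroBiasKernel.comp ((hX.comp measurable_fst).prodMk measurable_snd))
  have hbound : ∀ x t, ‖g t * zeroBiasKernel x t‖ ≤ C * zeroBiasKernel x t := fun x t => by
    rw [norm_mul, Real.norm_of_nonneg (zeroBiasKernel_nonneg x t), Real.norm_eq_abs]
    exact mul_le_mul_of_nonneg_right (hC t) (zeroBiasKernel_nonneg x t)
  refine (integrable_prod_iff hmeas.aestronglyMeasurable).2
    ⟨.of_forall fun ω => ((integrable_zeroBiasKernel (X ω)).const_mul C).mono'
      (hmeas.comp measurable_prodMk_left).aestronglyMeasurable (.of_forall (hbound (X ω))),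
    (hX2.const_mul C).mono' hmeas.aestronglyMeasurable.norm.integral_prod_right' ?_⟩
  refine .of_forall fun ω => ?_
  rw [Real.norm_of_nonneg (integral_nonneg fun t => norm_nonneg _), ← integral_zeroBiasKernel,
    ← integral_const_mul]
  exact integral_mono_of_nonneg (.of_forall fun t => norm_nonneg _)
    ((integrable_zeroBiasKernel (X ω)).const_mul C) (.of_forall (hbound (X ω)))

lemma integral_zeroBiasKernel_comp {Ω : Type*} [MeasurableSpace Ω] {μ : Measure Ω}
    {X : Ω → ℝ} (hX : Measurable X) (hX1 : Integrable X μ) (hmean : ∫ ω, X ω ∂μ = 0) (t : ℝ) :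
    ∫ ω, zeroBiasKernel (X ω) t ∂μ = ∫ ω, (if t < X ω then X ω else 0) ∂μ := by
  have hint : Integrable (fun ω => if t < X ω then X ω else 0) μ :=
    (hX1.indicator (hX (measurableSet_Ioi (a := t)))).congr (.of_forall fun _ => rfl)
  unfold zeroBiasKernel
  by_cases ht : t < 0
  · simp [ht, integral_sub hint hX1, hmean]
  · simp [ht]

theorem stmt_7_general {Ω : Type*} [MeasurableSpace Ω] (μ : Measure Ω) [IsProbabilityMeasure μ]
    (X : Ω → ℝ) (hXmeas : Measurable X)
    (hX1 : Integrable X μ) (hX2 : Integrable (fun ω => (X ω) ^ 2) μ)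
    (hmean : ∫ ω, X ω ∂μ = 0)
    (f : ℝ → ℝ) (hf : ContDiff ℝ 1 f) (C : ℝ) (hC : ∀ t, |deriv f t| ≤ C) :
    ∫ ω, X ω * f (X ω) ∂μ
      = ∫ t : ℝ, deriv f t * (∫ ω, (if t < X ω then X ω else 0) ∂μ) := by
  have hint := integrable_mul_zeroBiasKernel_comp hXmeas hX2
    (hf.continuous_deriv le_rfl).measurable hC
  calc ∫ ω, X ω * f (X ω) ∂μ
      = ∫ ω, (f 0 * X ω + ∫ t, deriv f t * zeroBiasKernel (X ω) t) ∂μ := by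
        congr 1 with ω
        rw [integral_deriv_mul_zeroBiasKernel hf]
        ring
    _ = ∫ ω, (∫ t, deriv f t * zeroBiasKernel (X ω) t) ∂μ := by
        rw [integral_add (hX1.const_mul _) hint.integral_prod_left, integral_const_mul, hmean,
          mul_zero, zero_add]
    _ = ∫ t, ∫ ω, deriv f t * zeroBiasKernel (X ω) t ∂μ := integral_integral_swap hint
    _ = ∫ t : ℝ, deriv f t * (∫ ω, (if t < X ω then X ω else 0) ∂μ) := by
        congr 1 with t
        rw [integral_const_mul, integral_zeroBiasKernel_comp hXmeas hX1 hmean]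

theorem stmt_7 {Ω : Type*} [MeasurableSpace Ω] (μ : Measure Ω) [IsProbabilityMeasure μ]
    (X : Ω → ℝ) (hXmeas : Measurable X)
    (hX1 : Integrable X μ) (hX2 : Integrable (fun ω => (X ω) ^ 2) μ)
    (hmean : ∫ ω, X ω ∂μ = 0) (hvar : ∫ ω, (X ω) ^ 2 ∂μ = 1)
    (f : ℝ → ℝ) (hf : ContDiff ℝ 1 f) (C : ℝ) (hC : ∀ t, |deriv f t| ≤ C) :
    ∫ ω, X ω * f (X ω) ∂μ
      = ∫ t : ℝ, deriv f t * (∫ ω, (if t < X ω then X ω else 0) ∂μ) :=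
  stmt_7_general μ X hXmeas hX1 hX2 hmean f hf C hC
end

section
/- Let X₁,…,Xₙ be real numbers with sample mean X̄ₙ = n⁻¹Σⱼ Xⱼ and sample variance Sₙ² = n⁻¹Σⱼ(Xⱼ − X̄ₙ)² > 0. Define d̂ₙ(s) = -n⁻¹ Σⱼ (Xⱼ − X̄ₙ)/Sₙ² · 1{Xⱼ ≤ s}. Then d̂ₙ(s) ≥ 0 for all s ∈ ℝ and ∫_ℝ d̂ₙ(s) ds = 1, i.e., d̂ₙ is a probability density. -/
open MeasureTheory Finset

/-!
Since `∑ j, (X j - X̄) = 0`, adding `(X j - X̄) * 1{X̄ ≤ s}` to each summand of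
`-∑ j, (X j - X̄) * 1{X j ≤ s}` does not change the sum. The new summand
`(X j - X̄) * (1{X̄ ≤ s} - 1{X j ≤ s})` is `|X j - X̄|` times the indicator of the interval between
`X̄` and `X j`: it is nonnegative with integral `(X j - X̄) ^ 2`, and these sum to `n Sₙ²`.
-/

lemma sub_mul_ite_le_sub_ite_le (m x s : ℝ) :
    (x - m) * ((if m ≤ s then 1 else 0) - (if x ≤ s then 1 else 0)) =
      (Set.Ico (min m x) (max m x)).indicator (fun _ => |x - m|) s := by
  rcases le_total m x with h | h
  · simp only [min_eq_left h, max_eq_right h, abs_of_nonneg (sub_nonneg.2 h), Set.indicator_apply,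
      Set.mem_Ico]
    grind
  · simp only [min_eq_right h, max_eq_left h, abs_of_nonpos (sub_nonpos.2 h), Set.indicator_apply,
      Set.mem_Ico]
    grind

lemma integrable_indicator_Ico_const (a b c : ℝ) :
    Integrable ((Set.Ico a b).indicator fun _ => c) :=
  (integrable_indicator_iff measurableSet_Ico).2 (integrableOn_const measure_Ico_lt_top.ne)

lemma integral_indicator_Ico_min_max_abs (m x : ℝ) :
    ∫ s, (Set.Ico (min m x) (max m x)).indicator (fun _ => |x - m|) s = (x - m) ^ 2 := by
  rw [integral_indicator_const _ measurableSet_Ico, Real.volume_real_Ico_of_le min_le_max,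
    max_sub_min_eq_abs, smul_eq_mul, ← sq, sq_abs]

lemma sum_sub_sum_div_card_eq_zero {ι : Type*} [Fintype ι] (x : ι → ℝ) :
    ∑ j, (x j - (∑ i, x i) / Fintype.card ι) = 0 := by
  rcases isEmpty_or_nonempty ι with hι | hι
  · simp
  · rw [sum_sub_distrib, sum_const, card_univ, nsmul_eq_mul,
      mul_div_cancel₀ _ (by positivity), sub_self]

section CenteredStep

variable {ι : Type*} [Fintype ι] (x : ι → ℝ) {m : ℝ}

lemma neg_sum_sub_mul_ite_le_eq_sum_indicator (hm : ∑ j, (x j - m) = 0) (s : ℝ) :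
    -∑ j, (x j - m) * (if x j ≤ s then 1 else 0) =
      ∑ j, (Set.Ico (min m (x j)) (max m (x j))).indicator (fun _ => |x j - m|) s := by
  simp only [← sub_mul_ite_le_sub_ite_le, mul_sub, sum_sub_distrib, ← sum_mul, hm, zero_mul,
    zero_sub]

lemma neg_sum_sub_mul_ite_le_nonneg (hm : ∑ j, (x j - m) = 0) (s : ℝ) :
    0 ≤ -∑ j, (x j - m) * (if x j ≤ s then 1 else 0) := by
  rw [neg_sum_sub_mul_ite_le_eq_sum_indicator x hm]
  exact sum_nonneg fun j _ => Set.indicator_nonneg (fun _ _ => abs_nonneg _) s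

lemma integral_neg_sum_sub_mul_ite_le (hm : ∑ j, (x j - m) = 0) :
    ∫ s, -∑ j, (x j - m) * (if x j ≤ s then 1 else 0) = ∑ j, (x j - m) ^ 2 := by
  simp only [neg_sum_sub_mul_ite_le_eq_sum_indicator x hm]
  rw [integral_finsetSum _ fun j _ => integrable_indicator_Ico_const _ _ _]
  simp only [integral_indicator_Ico_min_max_abs]

end CenteredStep

theorem stmt_17 (n : ℕ) (hn : 0 < n) (X : Fin n → ℝ)
    (Xbar S2 : ℝ) (hXbar : Xbar = (∑ j, X j) / n)
    (hS2 : S2 = (∑ j, (X j - Xbar) ^ 2) / n) (hS2pos : 0 < S2)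
    (dhat : ℝ → ℝ)
    (hd : ∀ s, dhat s
      = -(1 / n) * ∑ j, (X j - Xbar) / S2 * (if X j ≤ s then 1 else 0)) :
    (∀ s, 0 ≤ dhat s) ∧ ∫ s : ℝ, dhat s = 1 := by
  have hm : ∑ j, (X j - Xbar) = 0 := by simpa [hXbar] using sum_sub_sum_div_card_eq_zero X
  have hsq : ∑ j, (X j - Xbar) ^ 2 = n * S2 := by rw [hS2, mul_div_cancel₀ _ (by positivity)]
  have hdhat : dhat = fun s => (n * S2)⁻¹ * -∑ j, (X j - Xbar) * (if X j ≤ s then 1 else 0) := by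
    funext s
    rw [hd]
    simp only [div_mul_eq_mul_div, ← sum_div]
    ring
  refine ⟨fun s => ?_, ?_⟩
  · rw [hdhat]
    exact mul_nonneg (by positivity) (neg_sum_sub_mul_ite_le_nonneg X hm s)
  · rw [hdhat, integral_const_mul, integral_neg_sum_sub_mul_ite_le X hm, hsq]
    exact inv_mul_cancel₀ (by positivity)
end

section
/- Let X₁,…,Xₙ be real numbers with sample mean X̄ₙ and sample variance Sₙ² > 0, and define F̂ₙ(s) = n⁻¹ Σⱼ (Xⱼ − X̄ₙ)/Sₙ² · (Xⱼ − s) · 1{Xⱼ ≤ s}. Then F̂ₙ is a continuous, nondecreasing function on ℝ with limit 0 at -∞ and 1 at +∞, i.e., F̂ₙ is a continuous distribution function. -/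
open Finset Filter

/-!
Since `(a - s) * 1{a ≤ s} = min (a - s) 0`, the function `n S² F̂ₙ(s) = ∑ⱼ (Xⱼ - X̄) min (Xⱼ - s) 0`
is continuous and piecewise linear; it vanishes to the left of all `Xⱼ` and equals
`∑ⱼ (Xⱼ - X̄) (Xⱼ - s) = n S²` to the right of them. For `s ≤ t` its increment is
`-∑ⱼ (Xⱼ - X̄) φ(Xⱼ)` with `φ a = max (t - max s a) 0` antitone, which is nonnegative by
Chebyshev's sum inequality.
-/

theorem sub_mul_indicator_le_eq_min (a s : ℝ) :
    (a - s) * (if a ≤ s then 1 else 0) = min (a - s) 0 := by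
  split_ifs with h
  · rw [mul_one, min_eq_left (sub_nonpos.mpr h)]
  · rw [mul_zero, min_eq_right (sub_nonneg.mpr (not_le.mp h).le)]

theorem min_sub_zero_eq_sub_max {s t : ℝ} (hst : s ≤ t) (a : ℝ) :
    min (a - t) 0 = min (a - s) 0 - max (t - max s a) 0 := by
  rcases le_total a s with has | has <;> rcases le_total a t with hat | hat <;>
    simp only [min_def, max_def] <;> split_ifs <;> linarith

section Mean

variable {ι : Type*} [Fintype ι] {x : ι → ℝ} {m : ℝ}

theorem sum_sub_mean_eq_zero (hm : m = (∑ i, x i) / Fintype.card ι) :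
    ∑ i, (x i - m) = 0 := by
  rcases isEmpty_or_nonempty ι with hι | hι
  · simp
  rw [sum_sub_distrib, sum_const, card_univ, nsmul_eq_mul, hm,
    mul_div_cancel₀ _ (Nat.cast_ne_zero.mpr Fintype.card_ne_zero), sub_self]

theorem sum_sub_mean_mul_sub_eq (hm : m = (∑ i, x i) / Fintype.card ι) (s : ℝ) :
    ∑ i, (x i - m) * (x i - s) = ∑ i, (x i - m) ^ 2 := by
  have hcentred : ∑ i, (x i - m) * (m - s) = 0 := by
    rw [← sum_mul, sum_sub_mean_eq_zero hm, zero_mul]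
  rw [← sub_eq_zero, ← sum_sub_distrib, ← hcentred]
  exact sum_congr rfl fun i _ ↦ by ring

theorem sum_sub_mean_mul_antitone_nonpos (hm : m = (∑ i, x i) / Fintype.card ι)
    {φ : ℝ → ℝ} (hφ : Antitone φ) : ∑ i, (x i - m) * φ (x i) ≤ 0 := by
  rcases isEmpty_or_nonempty ι with hι | hι
  · simp
  have hcheb := ((monovary_self x).comp_antitone_left hφ).card_mul_sum_le_sum_mul_sum
  simp only [Function.comp_apply] at hcheb
  have hcard : (0 : ℝ) < Fintype.card ι := Nat.cast_pos.mpr Fintype.card_pos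
  have hexpand : ∑ i, (x i - m) * φ (x i) = ∑ i, φ (x i) * x i - m * ∑ i, φ (x i) := by
    rw [mul_sum, ← sum_sub_distrib]
    exact sum_congr rfl fun i _ ↦ by ring
  rw [hexpand, hm, div_mul_eq_mul_div, sub_nonpos, le_div_iff₀ hcard, mul_comm]
  linarith

theorem monotone_sum_sub_mean_mul_min (hm : m = (∑ i, x i) / Fintype.card ι) :
    Monotone fun s ↦ ∑ i, (x i - m) * min (x i - s) 0 := by
  intro s t hst
  have hφ : Antitone fun a ↦ max (t - max s a) 0 := fun a b hab ↦
    max_le_max_right 0 (sub_le_sub_left (max_le_max_left s hab) t)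
  have hdiff := sum_sub_mean_mul_antitone_nonpos hm hφ
  simp only [min_sub_zero_eq_sub_max hst, mul_sub, sum_sub_distrib]
  linarith

end Mean

section PiecewiseLinear

variable {ι : Type*} [Fintype ι] (w x : ι → ℝ)

theorem eventually_sum_mul_min_eq_zero_atBot :
    ∀ᶠ s in atBot, ∑ i, w i * min (x i - s) 0 = 0 := by
  filter_upwards [eventually_all.mpr fun i ↦ eventually_le_atBot (x i)] with s hs
  exact sum_eq_zero fun i _ ↦ by rw [min_eq_right (sub_nonneg.mpr (hs i)), mul_zero]

theorem eventually_sum_mul_min_eq_atTop :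
    ∀ᶠ s in atTop, ∑ i, w i * min (x i - s) 0 = ∑ i, w i * (x i - s) := by
  filter_upwards [eventually_all.mpr fun i ↦ eventually_ge_atTop (x i)] with s hs
  exact sum_congr rfl fun i _ ↦ by rw [min_eq_left (sub_nonpos.mpr (hs i))]

end PiecewiseLinear

theorem stmt_18_general (n : ℕ) (X : Fin n → ℝ)
    (Xbar S2 : ℝ) (hXbar : Xbar = (∑ j, X j) / n)
    (hS2 : S2 = (∑ j, (X j - Xbar) ^ 2) / n) (hS2pos : 0 < S2)
    (Fhat : ℝ → ℝ)
    (hF : ∀ s, Fhat s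
      = (1 / n) * ∑ j, (X j - Xbar) / S2 * (X j - s) * (if X j ≤ s then 1 else 0)) :
    Continuous Fhat ∧ Monotone Fhat ∧
      Tendsto Fhat atBot (nhds 0) ∧ Tendsto Fhat atTop (nhds 1) := by
  have hn : (n : ℝ) ≠ 0 := fun h ↦ by simp [hS2, h] at hS2pos
  have hmean : Xbar = (∑ j, X j) / Fintype.card (Fin n) := by rw [hXbar, Fintype.card_fin]
  set G : ℝ → ℝ := fun s ↦ ∑ j, (X j - Xbar) * min (X j - s) 0
  have hFG : Fhat = fun s ↦ (n * S2)⁻¹ * G s := funext fun s ↦ by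
    simp only [hF, G, mul_sum, mul_assoc, sub_mul_indicator_le_eq_min]
    exact sum_congr rfl fun j _ ↦ by field_simp
  have hG_top : ∀ᶠ s in atTop, G s = n * S2 := by
    filter_upwards [eventually_sum_mul_min_eq_atTop (fun j ↦ X j - Xbar) X] with s hs
    simp only [G]
    rw [hs, sum_sub_mean_mul_sub_eq hmean, hS2, mul_div_cancel₀ _ hn]
  rw [hFG]
  refine ⟨by fun_prop, (monotone_sum_sub_mean_mul_min hmean).const_mul (by positivity), ?_, ?_⟩
  · refine tendsto_const_nhds.congr' ?_
    filter_upwards [eventually_sum_mul_min_eq_zero_atBot (fun j ↦ X j - Xbar) X] with s hs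
    simp [G, hs]
  · refine tendsto_const_nhds.congr' ?_
    filter_upwards [hG_top] with s hs
    rw [hs, inv_mul_cancel₀ (mul_ne_zero hn hS2pos.ne')]

theorem stmt_18 (n : ℕ) (hn : 0 < n) (X : Fin n → ℝ)
    (Xbar S2 : ℝ) (hXbar : Xbar = (∑ j, X j) / n)
    (hS2 : S2 = (∑ j, (X j - Xbar) ^ 2) / n) (hS2pos : 0 < S2)
    (Fhat : ℝ → ℝ)
    (hF : ∀ s, Fhat s
      = (1 / n) * ∑ j, (X j - Xbar) / S2 * (X j - s) * (if X j ≤ s then 1 else 0)) :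
    Continuous Fhat ∧ Monotone Fhat ∧
      Tendsto Fhat atBot (nhds 0) ∧ Tendsto Fhat atTop (nhds 1) :=
  stmt_18_general n X Xbar S2 hXbar hS2 hS2pos Fhat hF
end
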